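/- arXiv:1510.00617 — 3 statements merged into one kernel-verified Lean document; each statement's English description precedes it below -/
import Mathlib

section
/- Let h(z) = (az+b)/(cz+d) be a Möbius transformation with c ≠ 0 that has exactly two distinct fixed points p and q in ℂ. Then for every z ∈ ℂ with z ∉ {h·z, h⁻¹·z, p, q}, one has 1/(z − h·z) + 1/(z − h⁻¹·z) = 1/(z−p) + 1/(z−q). -/
/-!
Writing `Q(z) = c z² + (d - a) z - b = c (z - p)(z - q)` for the fixed-point polynomial,
the displacements are `z - h z = Q(z) / (c z + d)` and `z - h⁻¹ z = -Q(z) / (a - c z)`.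
The sum of their reciprocals is therefore `((c z + d) - (a - c z)) / Q(z) = Q'(z) / Q(z)`,
the logarithmic derivative of `Q`, which is `1/(z - p) + 1/(z - q)`.
-/

section Field

variable {K : Type*} [Field K]

theorem sub_moebius_eq_div {a b c d : K} (z : K) (hz : c * z + d ≠ 0) :
    z - (a * z + b) / (c * z + d) = (c * z ^ 2 + (d - a) * z - b) / (c * z + d) := by
  rw [eq_div_iff hz, sub_mul, div_mul_cancel₀ _ hz]
  ring

theorem vieta_of_roots {c e f p q : K} (hpq : p ≠ q)
    (hp : c * p ^ 2 + e * p - f = 0) (hq : c * q ^ 2 + e * q - f = 0) :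
    e = -(c * (p + q)) ∧ f = -(c * p * q) := by
  have hdiff : (p - q) * (c * (p + q) + e) = 0 := by linear_combination hp - hq
  have he : e = -(c * (p + q)) := by
    linear_combination (mul_eq_zero.mp hdiff).resolve_left (sub_ne_zero.mpr hpq)
  exact ⟨he, by linear_combination -hp + p * he⟩

theorem quadratic_eq_mul_sub_mul_sub {c e f p q : K} (z : K) (hpq : p ≠ q)
    (hp : c * p ^ 2 + e * p - f = 0) (hq : c * q ^ 2 + e * q - f = 0) :
    c * z ^ 2 + e * z - f = c * ((z - p) * (z - q)) := by
  obtain ⟨rfl, rfl⟩ := vieta_of_roots hpq hp hq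
  ring

theorem deriv_div_quadratic_eq_add_inv_sub {c e f p q : K} (z : K) (hc : c ≠ 0) (hpq : p ≠ q)
    (hp : c * p ^ 2 + e * p - f = 0) (hq : c * q ^ 2 + e * q - f = 0)
    (hzp : z ≠ p) (hzq : z ≠ q) :
    (2 * c * z + e) / (c * z ^ 2 + e * z - f) = 1 / (z - p) + 1 / (z - q) := by
  obtain ⟨he, -⟩ := vieta_of_roots hpq hp hq
  have hzp' : z - p ≠ 0 := sub_ne_zero.mpr hzp
  have hzq' : z - q ≠ 0 := sub_ne_zero.mpr hzq
  rw [quadratic_eq_mul_sub_mul_sub z hpq hp hq, he]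
  field_simp
  ring

end Field

theorem stmt_1_general (a b c d p q z : ℂ) (hc : c ≠ 0)
    (hpq : p ≠ q)
    (hp : c * p ^ 2 + (d - a) * p - b = 0) (hq : c * q ^ 2 + (d - a) * q - b = 0)
    (hz1 : c * z + d ≠ 0) (hz2 : -c * z + a ≠ 0)
    (h3 : z ≠ p) (h4 : z ≠ q) :
    1 / (z - (a * z + b) / (c * z + d)) + 1 / (z - (d * z - b) / (-c * z + a)) =
      1 / (z - p) + 1 / (z - q) := by
  have hinv : z - (d * z - b) / (-c * z + a) =
      -(c * z ^ 2 + (d - a) * z - b) / (-c * z + a) := by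
    rw [sub_eq_add_neg (d * z), sub_moebius_eq_div z hz2]
    ring
  rw [sub_moebius_eq_div z hz1, hinv, one_div_div, one_div_div,
    ← deriv_div_quadratic_eq_add_inv_sub z hc hpq hp hq h3 h4,
    div_neg, ← sub_eq_add_neg, div_sub_div_same]
  ring

/-- For a Möbius transformation `h(z) = (az+b)/(cz+d)` with `c ≠ 0` having two distinct
fixed points `p, q` (roots of `cz² + (d−a)z − b = 0`),
`1/(z − h·z) + 1/(z − h⁻¹·z) = 1/(z−p) + 1/(z−q)`. -/
theorem stmt_1 (a b c d p q z : ℂ) (hdet : a * d - b * c ≠ 0) (hc : c ≠ 0)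
    (hpq : p ≠ q)
    (hp : c * p ^ 2 + (d - a) * p - b = 0) (hq : c * q ^ 2 + (d - a) * q - b = 0)
    (hz1 : c * z + d ≠ 0) (hz2 : -c * z + a ≠ 0)
    (h1 : z ≠ (a * z + b) / (c * z + d)) (h2 : z ≠ (d * z - b) / (-c * z + a))
    (h3 : z ≠ p) (h4 : z ≠ q) :
    1 / (z - (a * z + b) / (c * z + d)) + 1 / (z - (d * z - b) / (-c * z + a)) =
      1 / (z - p) + 1 / (z - q) :=
  stmt_1_general a b c d p q z hc hpq hp hq hz1 hz2 h3 h4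
end

section
/- Let G be a finite subgroup of SO(3) acting on S², and let P ⊂ S² be the set of points with nontrivial stabilizer. There exists a finite subset 𝔭 ⊂ P such that P is the disjoint union of 𝔭 and its antipodal image −𝔭, and the set G∖{1} is the disjoint union over p ∈ 𝔭 of the sets stab(p)∖{1}. -/
/-!
A nontrivial rotation `A` fixes a line: `det (A - 1) = 0` because the dimension is odd, and if `A`
fixed two independent vectors `u, v` it would also fix `u × v` (cofactor identity), hence a basis.
So the fixed points of `A` on the sphere are a single antipodal pair `±x`, and `P` is a finite
union of such pairs. Taking `𝔭` to be the lexicographically positive points of `P` picks exactly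
one point out of each pair.
-/

def onSphere (x : Fin 3 → ℝ) : Prop := x 0 ^ 2 + x 1 ^ 2 + x 2 ^ 2 = 1

open Matrix

section Lex
variable {ι β : Type*} [LinearOrder ι] [AddCommGroup β] [LinearOrder β]
  [IsOrderedAddMonoid β] {x : ι → β}

lemma toLex_pos_or_toLex_neg_pos [WellFoundedLT ι] (hx : x ≠ 0) :
    0 < toLex x ∨ 0 < toLex (-x) := by
  rw [toLex_neg, neg_pos]
  exact (lt_or_gt_of_ne (toLex_eq_zero.not.mpr hx)).symm

lemma not_toLex_pos_and_toLex_neg_pos : ¬(0 < toLex x ∧ 0 < toLex (-x)) := by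
  rw [toLex_neg, neg_pos]
  exact fun h => lt_asymm h.1 h.2

lemma existsUnique_toLex_pos_of_eq_or_eq_neg [WellFoundedLT ι] (hx : x ≠ 0) :
    ∃! p, (p = x ∨ p = -x) ∧ 0 < toLex p := by
  rcases toLex_pos_or_toLex_neg_pos hx with h | h
  · refine ⟨x, ⟨.inl rfl, h⟩, ?_⟩
    rintro p ⟨rfl | rfl, hp⟩
    exacts [rfl, (not_toLex_pos_and_toLex_neg_pos ⟨h, hp⟩).elim]
  · refine ⟨-x, ⟨.inr rfl, h⟩, ?_⟩
    rintro p ⟨rfl | rfl, hp⟩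
    exacts [(not_toLex_pos_and_toLex_neg_pos ⟨hp, h⟩).elim, rfl]

lemma union_neg_image_setOf_toLex_pos [WellFoundedLT ι] {S : Set (ι → β)}
    (hneg : ∀ x ∈ S, -x ∈ S) (h0 : (0 : ι → β) ∉ S) :
    {x ∈ S | 0 < toLex x} ∪ (-·) '' {x ∈ S | 0 < toLex x} = S := by
  ext x
  constructor
  · rintro (⟨hx, -⟩ | ⟨y, ⟨hy, -⟩, rfl⟩)
    exacts [hx, hneg y hy]
  · intro hx
    rcases toLex_pos_or_toLex_neg_pos (ne_of_mem_of_not_mem hx h0) with h | h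
    · exact .inl ⟨hx, h⟩
    · exact .inr ⟨-x, ⟨hneg x hx, h⟩, neg_neg x⟩

lemma disjoint_setOf_toLex_pos_neg_image (S : Set (ι → β)) :
    Disjoint {x ∈ S | 0 < toLex x} ((-·) '' {x ∈ S | 0 < toLex x}) := by
  rw [Set.disjoint_left]
  rintro _ ⟨-, hx⟩ ⟨y, ⟨-, hy⟩, rfl⟩
  exact not_toLex_pos_and_toLex_neg_pos ⟨hy, hx⟩
end Lex

section Odd
variable {n R : Type*} [Fintype n] [DecidableEq n] [CommRing R] [IsDomain R] [CharZero R]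

lemma Matrix.det_sub_one_eq_zero_of_mem_specialOrthogonalGroup {A : Matrix n n R}
    (hA : A ∈ specialOrthogonalGroup n R) (hn : Odd (Fintype.card n)) : (A - 1).det = 0 := by
  obtain ⟨hAo, hdet⟩ := mem_specialOrthogonalGroup_iff.mp hA
  have hsub : A - 1 = A * (1 - Aᵀ) := by
    rw [Matrix.mul_sub, mul_one, (mem_orthogonalGroup_iff n R).mp hAo]
  have : (A - 1).det = -(A - 1).det := calc
    (A - 1).det = (1 - A)ᵀ.det := by
      rw [hsub, det_mul, hdet, one_mul, transpose_sub, transpose_one]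
    _ = (-(A - 1)).det := by rw [det_transpose, neg_sub]
    _ = -(A - 1).det := by rw [det_neg, hn.neg_one_pow, neg_one_mul]
  exact CharZero.eq_neg_self_iff.mp this

lemma Matrix.exists_mulVec_eq_self_of_mem_specialOrthogonalGroup {A : Matrix n n R}
    (hA : A ∈ specialOrthogonalGroup n R) (hn : Odd (Fintype.card n)) :
    ∃ x ≠ 0, A *ᵥ x = x := by
  obtain ⟨x, hx, hAx⟩ :=
    exists_mulVec_eq_zero_iff.mpr (det_sub_one_eq_zero_of_mem_specialOrthogonalGroup hA hn)
  exact ⟨x, hx, by rwa [sub_mulVec, one_mulVec, sub_eq_zero] at hAx⟩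
end Odd

section Cross
variable {R : Type*} [CommRing R]

lemma Matrix.cross_mulVec_vecMul (A : Matrix (Fin 3) (Fin 3) R) (u v : Fin 3 → R) :
    (A *ᵥ u) ⨯₃ (A *ᵥ v) ᵥ* A = A.det • u ⨯₃ v := by
  refine dotProduct_eq _ _ fun x => ?_
  have hrows : of ![x, u, v] * Aᵀ = of ![A *ᵥ x, A *ᵥ u, A *ᵥ v] := by
    ext i j
    fin_cases i <;> simp [mul_apply, mulVec, dotProduct, mul_comm]
  calc (A *ᵥ u) ⨯₃ (A *ᵥ v) ᵥ* A ⬝ᵥ x = A *ᵥ x ⬝ᵥ (A *ᵥ u) ⨯₃ (A *ᵥ v) := by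
        rw [← dotProduct_mulVec, dotProduct_comm]
    _ = (of ![x, u, v] * Aᵀ).det := by rw [hrows]; exact triple_product_eq_det _ _ _
    _ = (x ⬝ᵥ u ⨯₃ v) * A.det := by rw [det_mul, det_transpose, triple_product_eq_det]; rfl
    _ = A.det • u ⨯₃ v ⬝ᵥ x := by rw [smul_dotProduct, smul_eq_mul, dotProduct_comm, mul_comm]

lemma eq_smul_of_cross_eq_zero {x y : Fin 3 → R} (hx : x ⬝ᵥ x = 1) (h : x ⨯₃ y = 0) :
    y = (x ⬝ᵥ y) • x := by
  have := cross_cross_eq_smul_sub_smul x y x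
  rw [h, hx, one_smul, dotProduct_comm] at this
  simpa [sub_eq_zero] using this.symm

lemma eq_or_eq_neg_of_cross_eq_zero [IsDomain R] {x y : Fin 3 → R} (hx : x ⬝ᵥ x = 1)
    (hy : y ⬝ᵥ y = 1) (h : x ⨯₃ y = 0) : y = x ∨ y = -x := by
  have hy' := eq_smul_of_cross_eq_zero hx h
  have hc : (x ⬝ᵥ y) * (x ⬝ᵥ y) = 1 := by
    rw [← hy, hy', smul_dotProduct, dotProduct_smul, hx, smul_eq_mul, smul_eq_mul, mul_one]
  rcases mul_self_eq_one_iff.mp hc with hc | hc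
  · left; rw [hy', hc, one_smul]
  · right; rw [hy', hc, neg_one_smul]
end Cross

lemma Matrix.vecMul_eq_self_of_mulVec_eq_self {n R : Type*} [Fintype n] [DecidableEq n]
    [CommRing R] {A : Matrix n n R} (hA : A ∈ orthogonalGroup n R) {x : n → R} (hx : A *ᵥ x = x) :
    x ᵥ* A = x := by
  conv_lhs => rw [← hx]
  rw [← vecMul_transpose, vecMul_vecMul, (mem_orthogonalGroup_iff' _ _).mp hA, vecMul_one]

section SO3
variable {R : Type*} [Field R] [LinearOrder R] [IsStrictOrderedRing R]
  {A : Matrix (Fin 3) (Fin 3) R}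

lemma Matrix.eq_one_of_mulVec_eq_self_of_cross_ne_zero
    (hA : A ∈ specialOrthogonalGroup (Fin 3) R) {u v : Fin 3 → R} (hu : A *ᵥ u = u)
    (hv : A *ᵥ v = v) (huv : u ⨯₃ v ≠ 0) : A = 1 := by
  set w := u ⨯₃ v
  obtain ⟨hAo, hdet⟩ := mem_specialOrthogonalGroup_iff.mp hA
  have hw : w ᵥ* A = w := by
    simpa only [hu, hv, hdet, one_smul] using cross_mulVec_vecMul A u v
  set M := of ![u, v, w]
  have hMA : M * A = M := by
    simp [M, vecMul_eq_self_of_mulVec_eq_self hAo hu, vecMul_eq_self_of_mulVec_eq_self hAo hv, hw]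
  have hM : IsUnit M.det := by
    have : M.det = w ⬝ᵥ w := (triple_product_eq_det u v w).symm.trans <| by
      rw [triple_product_permutation, triple_product_permutation]
    rw [this, isUnit_iff_ne_zero]
    exact fun h => huv (dotProduct_self_eq_zero.mp h)
  calc A = M⁻¹ * M * A := by rw [nonsing_inv_mul _ hM, one_mul]
    _ = 1 := by rw [mul_assoc, hMA, nonsing_inv_mul _ hM]
end SO3

lemma onSphere_iff_dotProduct_self {x : Fin 3 → ℝ} : onSphere x ↔ x ⬝ᵥ x = 1 := by
  rw [onSphere, vec3_dotProduct, sq, sq, sq]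

lemma onSphere.ne_zero {x : Fin 3 → ℝ} (hx : onSphere x) : x ≠ 0 := by
  rintro rfl
  norm_num [onSphere] at hx

lemma onSphere.neg {x : Fin 3 → ℝ} (hx : onSphere x) : onSphere (-x) := by
  simpa [onSphere] using hx

lemma exists_onSphere_smul {x : Fin 3 → ℝ} (hx : x ≠ 0) : ∃ c : ℝ, onSphere (c • x) := by
  have hpos : 0 < x ⬝ᵥ x :=
    lt_of_le_of_ne (Finset.sum_nonneg fun i _ => mul_self_nonneg (x i))
      (Ne.symm (dotProduct_self_eq_zero.not.mpr hx))
  refine ⟨(√(x ⬝ᵥ x))⁻¹, onSphere_iff_dotProduct_self.mpr ?_⟩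
  rw [smul_dotProduct, dotProduct_smul, smul_eq_mul, smul_eq_mul, ← mul_assoc, ← mul_inv,
    Real.mul_self_sqrt hpos.le, inv_mul_cancel₀ hpos.ne']

section Rotation
variable {A : Matrix (Fin 3) (Fin 3) ℝ}

lemma eq_or_eq_neg_of_onSphere_of_mulVec_eq_self (hA : A ∈ specialOrthogonalGroup (Fin 3) ℝ)
    (h1 : A ≠ 1) {x y : Fin 3 → ℝ} (hx : onSphere x) (hy : onSphere y) (hAx : A *ᵥ x = x)
    (hAy : A *ᵥ y = y) : y = x ∨ y = -x :=
  eq_or_eq_neg_of_cross_eq_zero (onSphere_iff_dotProduct_self.mp hx)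
    (onSphere_iff_dotProduct_self.mp hy)
    (not_not.mp (h1 ∘ eq_one_of_mulVec_eq_self_of_cross_ne_zero hA hAx hAy))

lemma exists_setOf_onSphere_mulVec_eq_self_eq_pair (hA : A ∈ specialOrthogonalGroup (Fin 3) ℝ)
    (h1 : A ≠ 1) : ∃ x, onSphere x ∧ {y | onSphere y ∧ A *ᵥ y = y} = {x, -x} := by
  obtain ⟨x, hx0, hAx⟩ := exists_mulVec_eq_self_of_mem_specialOrthogonalGroup hA
    (by rw [Fintype.card_fin]; decide)
  obtain ⟨c, hc⟩ := exists_onSphere_smul hx0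
  have hAcx : A *ᵥ (c • x) = c • x := by rw [mulVec_smul, hAx]
  refine ⟨c • x, hc, Set.ext fun y => ⟨fun ⟨hy, hAy⟩ => ?_, ?_⟩⟩
  · exact eq_or_eq_neg_of_onSphere_of_mulVec_eq_self hA h1 hc hy hAcx hAy
  · rintro (rfl | rfl)
    exacts [⟨hc, hAcx⟩, ⟨hc.neg, by rw [mulVec_neg, hAcx]⟩]
end Rotation

section FiniteRotationGroup
variable (G : Subgroup (orthogonalGroup (Fin 3) ℝ))

lemma exists_setOf_onSphere_mulVec_eq_self_eq_pair_of_mem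
    (hdet : ∀ g ∈ G, (g : Matrix (Fin 3) (Fin 3) ℝ).det = 1) {g : orthogonalGroup (Fin 3) ℝ}
    (hg : g ∈ G) (hg1 : g ≠ 1) :
    ∃ x, onSphere x ∧ {y | onSphere y ∧ (g : Matrix (Fin 3) (Fin 3) ℝ) *ᵥ y = y} = {x, -x} :=
  exists_setOf_onSphere_mulVec_eq_self_eq_pair ⟨g.2, hdet g hg⟩ fun h => hg1 (Subtype.ext h)

lemma finite_setOf_onSphere_mulVec_eq_self [Finite G]
    (hdet : ∀ g ∈ G, (g : Matrix (Fin 3) (Fin 3) ℝ).det = 1) :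
    {x | onSphere x ∧ ∃ g ∈ G, g ≠ 1 ∧ (g : Matrix (Fin 3) (Fin 3) ℝ) *ᵥ x = x}.Finite := by
  have hfin : ∀ g ∈ (G : Set (orthogonalGroup (Fin 3) ℝ)) \ {1},
      {y | onSphere y ∧ (g : Matrix (Fin 3) (Fin 3) ℝ) *ᵥ y = y}.Finite := by
    rintro g ⟨hg, hg1⟩
    obtain ⟨x, -, hx⟩ := exists_setOf_onSphere_mulVec_eq_self_eq_pair_of_mem G hdet hg hg1
    rw [hx]
    exact Set.toFinite _
  refine ((Set.toFinite _).biUnion hfin).subset ?_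
  rintro x ⟨hx, g, hg, hg1, hgx⟩
  exact Set.mem_biUnion ⟨hg, hg1⟩ ⟨hx, hgx⟩
end FiniteRotationGroup

/-- For a finite group `G ⊆ SO(3)` acting on the sphere, with `P` the set of sphere points
with nontrivial stabilizer, there is a finite set `𝔭` with `P = 𝔭 ⊔ (−𝔭)` (disjointly),
and `G∖{1}` is the disjoint union over `p ∈ 𝔭` of `stab(p)∖{1}` (i.e. every nontrivial
`g ∈ G` fixes exactly one point of `𝔭`). -/
theorem stmt_6 (G : Subgroup (Matrix.orthogonalGroup (Fin 3) ℝ)) [Finite G]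
    (hdet : ∀ g ∈ G, ((g : Matrix (Fin 3) (Fin 3) ℝ)).det = 1) :
    ∃ 𝔭 : Set (Fin 3 → ℝ), 𝔭.Finite ∧
      ({x : Fin 3 → ℝ | onSphere x ∧
          ∃ g ∈ G, g ≠ 1 ∧ (g : Matrix (Fin 3) (Fin 3) ℝ).mulVec x = x}
        = 𝔭 ∪ (fun p => -p) '' 𝔭) ∧
      Disjoint 𝔭 ((fun p => -p) '' 𝔭) ∧
      (∀ g : Matrix.orthogonalGroup (Fin 3) ℝ, g ∈ G → g ≠ 1 →
        ∃! p, p ∈ 𝔭 ∧ (g : Matrix (Fin 3) (Fin 3) ℝ).mulVec p = p) := by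
  set P := {x : Fin 3 → ℝ | onSphere x ∧
    ∃ g ∈ G, g ≠ 1 ∧ (g : Matrix (Fin 3) (Fin 3) ℝ).mulVec x = x}
  have hneg : ∀ x ∈ P, -x ∈ P := fun x ⟨hx, g, hg, hg1, hgx⟩ =>
    ⟨hx.neg, g, hg, hg1, by rw [mulVec_neg, hgx]⟩
  refine ⟨{x ∈ P | 0 < toLex x},
    (finite_setOf_onSphere_mulVec_eq_self G hdet).subset (Set.sep_subset _ _),
    (union_neg_image_setOf_toLex_pos hneg fun h => h.1.ne_zero rfl).symm,
    disjoint_setOf_toLex_pos_neg_image P, fun g hg hg1 => ?_⟩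
  obtain ⟨x, hx, hfix⟩ := exists_setOf_onSphere_mulVec_eq_self_eq_pair_of_mem G hdet hg hg1
  refine (existsUnique_congr fun p => ?_).mpr (existsUnique_toLex_pos_of_eq_or_eq_neg hx.ne_zero)
  rw [show p = x ∨ p = -x ↔ p ∈ {x, -x} by rw [Set.mem_insert_iff, Set.mem_singleton_iff],
    ← hfix]
  constructor
  · rintro ⟨⟨⟨hp, -⟩, hpos⟩, hgp⟩
    exact ⟨⟨hp, hgp⟩, hpos⟩
  · rintro ⟨⟨hp, hgp⟩, hpos⟩
    exact ⟨⟨⟨hp, g, hg, hg1, hgp⟩, hpos⟩, hgp⟩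
end

section
/- Let Γ be a group, K a field of characteristic zero, I the augmentation ideal of the group algebra K[Γ]. Then the map Γ → I/I², x ↦ (x−1) + I², induces an isomorphism of K-vector spaces Γ^{ab} ⊗_ℤ K ≅ I/I². -/
/-!
The identity `xy - 1 = (x - 1) + (y - 1) + (x - 1)(y - 1)` makes `x ↦ (x - 1) + I²` a
homomorphism `Γ → I/I²`, which factors through `Γᵃᵇ` and extends `K`-linearly to `K ⊗ Γᵃᵇ`.
Conversely the `K`-linear map `D : K[Γ] → K ⊗ Γᵃᵇ`, `x ↦ 1 ⊗ [x]`, is a derivation along the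
augmentation `ε`, i.e. `D(ab) = ε(b) D(a) + ε(a) D(b)`, so it kills `I²` and descends to `I/I²`.
Composing the two maps gives `1 ⊗ [x] ↦ 1 ⊗ [x]` on one side, and on the other the projection
`a ↦ (a - ε(a)) + I²` on `K[Γ]`, which restricts to the quotient map on `I`.
-/

open TensorProduct

lemma Abelianization.of_surjective {G : Type*} [Group G] :
    Function.Surjective (Abelianization.of : G → Abelianization G) :=
  QuotientGroup.mk_surjective

namespace MonoidAlgebra

variable (K : Type*) [CommRing K] (Γ : Type*) [Group Γ]

noncomputable abbrev augmentation : MonoidAlgebra K Γ →ₐ[K] K := lift K K Γ 1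

noncomputable abbrev augIdeal : Submodule K (MonoidAlgebra K Γ) :=
  LinearMap.ker (augmentation K Γ).toLinearMap

noncomputable abbrev augIdealSq : Submodule K (augIdeal K Γ) :=
  (augIdeal K Γ * augIdeal K Γ).comap (augIdeal K Γ).subtype

noncomputable abbrev AugCotangent := augIdeal K Γ ⧸ augIdealSq K Γ

variable {K Γ}

lemma augmentation_of (x : Γ) : augmentation K Γ (of K Γ x) = 1 := by
  simp

variable (K) in
lemma of_sub_one_mem_augIdeal (x : Γ) : of K Γ x - 1 ∈ augIdeal K Γ := by
  simp [LinearMap.mem_ker]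

variable (K) in
noncomputable def cotangentClass (x : Γ) : AugCotangent K Γ :=
  Submodule.Quotient.mk ⟨of K Γ x - 1, of_sub_one_mem_augIdeal K x⟩

lemma cotangentClass_mul (x y : Γ) :
    cotangentClass K (x * y) = cotangentClass K x + cotangentClass K y := by
  rw [cotangentClass, cotangentClass, cotangentClass, ← Submodule.Quotient.mk_add,
    Submodule.Quotient.eq, Submodule.mem_comap]
  have h : of K Γ (x * y) - 1 - ((of K Γ x - 1) + (of K Γ y - 1)) =
      (of K Γ x - 1) * (of K Γ y - 1) := by
    rw [map_mul]; noncomm_ring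
  rw [Submodule.subtype_apply, Submodule.coe_sub, Submodule.coe_add, h]
  exact Submodule.mul_mem_mul (of_sub_one_mem_augIdeal K x) (of_sub_one_mem_augIdeal K y)

variable (K Γ) in
noncomputable def abelianizationToCotangent :
    Additive (Abelianization Γ) →ₗ[ℤ] AugCotangent K Γ :=
  (MonoidHom.toAdditiveLeft <| Abelianization.lift <|
    MonoidHom.mk' (fun x => Multiplicative.ofAdd (cotangentClass K x)) fun x y => by
      rw [cotangentClass_mul, ofAdd_add]).toIntLinearMap

variable (K Γ) in
noncomputable def tensorToCotangent :
    K ⊗[ℤ] Additive (Abelianization Γ) →ₗ[K] AugCotangent K Γ :=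
  (abelianizationToCotangent K Γ).liftBaseChange K

lemma tensorToCotangent_tmul (k : K) (x : Γ) :
    tensorToCotangent K Γ (k ⊗ₜ Additive.ofMul (Abelianization.of x)) =
      k • cotangentClass K x :=
  rfl

variable (K Γ) in
noncomputable def abelianizationDerivation :
    MonoidAlgebra K Γ →ₗ[K] K ⊗[ℤ] Additive (Abelianization Γ) :=
  (basis Γ K).constr K fun x => 1 ⊗ₜ Additive.ofMul (Abelianization.of x)

lemma abelianizationDerivation_of (x : Γ) :
    abelianizationDerivation K Γ (of K Γ x) = 1 ⊗ₜ Additive.ofMul (Abelianization.of x) :=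
  (basis Γ K).constr_basis K _ x

lemma abelianizationDerivation_one : abelianizationDerivation K Γ 1 = 0 := by
  rw [← map_one (of K Γ), abelianizationDerivation_of, map_one, ofMul_one, tmul_zero]

lemma abelianizationDerivation_mul (a b : MonoidAlgebra K Γ) :
    abelianizationDerivation K Γ (a * b) =
      augmentation K Γ b • abelianizationDerivation K Γ a +
        augmentation K Γ a • abelianizationDerivation K Γ b := by
  induction a using MonoidAlgebra.induction_on with
  | of x =>
    induction b using MonoidAlgebra.induction_on with
    | of y =>
      rw [← map_mul, abelianizationDerivation_of, abelianizationDerivation_of,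
        abelianizationDerivation_of, augmentation_of, augmentation_of, one_smul, one_smul,
        map_mul, ofMul_mul, tmul_add]
    | add b₁ b₂ h₁ h₂ => simp only [mul_add, map_add, h₁, h₂, add_smul, smul_add]; abel
    | smul r b h =>
      rw [mul_smul_comm, map_smul, h, map_smul, map_smul, smul_eq_mul]
      module
  | add a₁ a₂ h₁ h₂ => simp only [add_mul, map_add, h₁, h₂, add_smul, smul_add]; abel
  | smul r a h =>
    rw [smul_mul_assoc, map_smul, h, map_smul, map_smul, smul_eq_mul]
    module

lemma augIdeal_mul_le_ker_abelianizationDerivation :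
    augIdeal K Γ * augIdeal K Γ ≤ LinearMap.ker (abelianizationDerivation K Γ) := by
  refine Submodule.mul_le.2 fun a ha b hb => ?_
  rw [LinearMap.mem_ker] at ha hb ⊢
  simp only [AlgHom.toLinearMap_apply] at ha hb
  rw [abelianizationDerivation_mul, ha, hb, zero_smul, zero_smul, add_zero]

variable (K Γ) in
noncomputable def cotangentToTensor :
    AugCotangent K Γ →ₗ[K] K ⊗[ℤ] Additive (Abelianization Γ) :=
  (augIdealSq K Γ).liftQ (abelianizationDerivation K Γ ∘ₗ (augIdeal K Γ).subtype)
    fun _ h => augIdeal_mul_le_ker_abelianizationDerivation h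

lemma cotangentToTensor_mk (a : augIdeal K Γ) :
    cotangentToTensor K Γ (Submodule.Quotient.mk a) = abelianizationDerivation K Γ a :=
  rfl

lemma cotangentToTensor_cotangentClass (x : Γ) :
    cotangentToTensor K Γ (cotangentClass K x) = 1 ⊗ₜ Additive.ofMul (Abelianization.of x) := by
  rw [cotangentClass, cotangentToTensor_mk, map_sub, abelianizationDerivation_of,
    abelianizationDerivation_one, sub_zero]

variable (K Γ) in
noncomputable def toAugIdeal : MonoidAlgebra K Γ →ₗ[K] augIdeal K Γ :=
  LinearMap.codRestrict (augIdeal K Γ)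
    (LinearMap.id - Algebra.linearMap K _ ∘ₗ (augmentation K Γ).toLinearMap)
    fun a => by simp [LinearMap.mem_ker]

lemma coe_toAugIdeal (a : MonoidAlgebra K Γ) :
    (toAugIdeal K Γ a : MonoidAlgebra K Γ) = a - algebraMap K _ (augmentation K Γ a) :=
  rfl

lemma toAugIdeal_of_mem {a : MonoidAlgebra K Γ} (ha : a ∈ augIdeal K Γ) :
    toAugIdeal K Γ a = ⟨a, ha⟩ := by
  rw [LinearMap.mem_ker] at ha
  apply Subtype.ext
  rw [coe_toAugIdeal, ← AlgHom.toLinearMap_apply, ha, map_zero, sub_zero]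

lemma tensorToCotangent_comp_abelianizationDerivation :
    tensorToCotangent K Γ ∘ₗ abelianizationDerivation K Γ =
      (augIdealSq K Γ).mkQ ∘ₗ toAugIdeal K Γ := by
  refine (basis Γ K).ext fun x => ?_
  rw [basis_apply, ← of_apply, LinearMap.comp_apply, abelianizationDerivation_of,
    tensorToCotangent_tmul, one_smul, LinearMap.comp_apply, cotangentClass]
  congr 1
  apply Subtype.ext
  rw [coe_toAugIdeal, augmentation_of, map_one]

lemma tensorToCotangent_cotangentToTensor (q : AugCotangent K Γ) :
    tensorToCotangent K Γ (cotangentToTensor K Γ q) = q := by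
  obtain ⟨⟨a, ha⟩, rfl⟩ := Submodule.Quotient.mk_surjective _ q
  rw [cotangentToTensor_mk, ← LinearMap.comp_apply,
    tensorToCotangent_comp_abelianizationDerivation, LinearMap.comp_apply,
    toAugIdeal_of_mem ha, Submodule.mkQ_apply]

lemma cotangentToTensor_comp_tensorToCotangent :
    cotangentToTensor K Γ ∘ₗ tensorToCotangent K Γ = LinearMap.id := by
  refine (LinearMap.liftBaseChangeEquiv K).symm.injective (LinearMap.ext fun m => ?_)
  obtain ⟨x, hx⟩ := Abelianization.of_surjective m.toMul
  rw [← ofMul_toMul m, ← hx, LinearMap.liftBaseChangeEquiv_symm_apply,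
    LinearMap.liftBaseChangeEquiv_symm_apply, LinearMap.comp_apply, tensorToCotangent_tmul,
    one_smul, cotangentToTensor_cotangentClass, LinearMap.id_apply]

variable (K Γ) in
noncomputable def tensorEquivAugCotangent :
    K ⊗[ℤ] Additive (Abelianization Γ) ≃ₗ[K] AugCotangent K Γ :=
  .ofLinearMap (tensorToCotangent K Γ) (cotangentToTensor K Γ)
    (LinearMap.ext tensorToCotangent_cotangentToTensor)
    cotangentToTensor_comp_tensorToCotangent

end MonoidAlgebra

open MonoidAlgebra in
theorem stmt_11_general (K : Type*) [Field K] (Γ : Type*) [Group Γ] :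
    (∀ x : Γ, MonoidAlgebra.of K Γ x - 1 ∈
        LinearMap.ker ((MonoidAlgebra.lift K K Γ) 1).toLinearMap) ∧
    ∃ φ : (K ⊗[ℤ] Additive (Abelianization Γ)) ≃ₗ[K]
        (↥(LinearMap.ker ((MonoidAlgebra.lift K K Γ) 1).toLinearMap) ⧸
          Submodule.comap
            (LinearMap.ker ((MonoidAlgebra.lift K K Γ) 1).toLinearMap).subtype
            (LinearMap.ker ((MonoidAlgebra.lift K K Γ) 1).toLinearMap *
              LinearMap.ker ((MonoidAlgebra.lift K K Γ) 1).toLinearMap)),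
      ∀ (x : Γ) (hx : MonoidAlgebra.of K Γ x - 1 ∈
          LinearMap.ker ((MonoidAlgebra.lift K K Γ) 1).toLinearMap),
        φ ((1 : K) ⊗ₜ[ℤ] Additive.ofMul (Abelianization.of x)) =
          Submodule.Quotient.mk ⟨MonoidAlgebra.of K Γ x - 1, hx⟩ :=
  ⟨of_sub_one_mem_augIdeal K, tensorEquivAugCotangent K Γ, fun x _ =>
    (tensorToCotangent_tmul 1 x).trans (one_smul K _)⟩

/-- For a group `Γ` and a field `K` of characteristic zero, with `I` the augmentation
ideal of `K[Γ]`, the map `x ↦ (x−1) + I²` induces an isomorphism of `K`-vector spaces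
`K ⊗_ℤ Γ^{ab} ≅ I/I²`. -/
theorem stmt_11 (K : Type*) [Field K] [CharZero K] (Γ : Type*) [Group Γ] :
    (∀ x : Γ, MonoidAlgebra.of K Γ x - 1 ∈
        LinearMap.ker ((MonoidAlgebra.lift K K Γ) 1).toLinearMap) ∧
    ∃ φ : (K ⊗[ℤ] Additive (Abelianization Γ)) ≃ₗ[K]
        (↥(LinearMap.ker ((MonoidAlgebra.lift K K Γ) 1).toLinearMap) ⧸
          Submodule.comap
            (LinearMap.ker ((MonoidAlgebra.lift K K Γ) 1).toLinearMap).subtype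
            (LinearMap.ker ((MonoidAlgebra.lift K K Γ) 1).toLinearMap *
              LinearMap.ker ((MonoidAlgebra.lift K K Γ) 1).toLinearMap)),
      ∀ (x : Γ) (hx : MonoidAlgebra.of K Γ x - 1 ∈
          LinearMap.ker ((MonoidAlgebra.lift K K Γ) 1).toLinearMap),
        φ ((1 : K) ⊗ₜ[ℤ] Additive.ofMul (Abelianization.of x)) =
          Submodule.Quotient.mk ⟨MonoidAlgebra.of K Γ x - 1, hx⟩ :=
  stmt_11_general K Γ
end
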